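/- Let 1 < β < (1+√5)/2 or suppose d_{−β}(1) is periodic with odd period. Then there exists a subshift factor of (Σ_{−β}, σ) that is not intrinsically ergodic; specifically, there is a continuous surjection π : Σ_{−β} → X with π∘σ = σ∘π, where X = {1^∞} ∪ {1^n 2^∞ : n ≥ 1} ∪ {2^∞}. -/

import Mathlib

/-!
The factor map codes a sequence by whether a fixed word `w` occurs within the next `W` places.
If, in every expansion, each occurrence of `w` is followed by another at most `W` places later,
this property is closed and passes to the closure `Σ_{-β}`, so every coded sequence is
non-decreasing in `{1, 2}`, i.e. lies in `X`. Prepending `1`s (the branch `y ↦ (1 - y) / β`)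
produces codes `1^m 2^∞` for arbitrarily large `m`, and the fixed point `(1 + β)⁻¹` with
expansion `1^∞` produces `1^∞`.

For `β < φ` the word is the digit `2`: the fixed point `(1 + β)⁻¹` of the digit-`1` branch is
repelling and uniformly far from the image of any point with digit `2`, so runs of `1`s between
`2`s are bounded. If `d_{-β}(1)` has odd period `n`, the word is its first `n` digits: `T^n`
reverses orientation on that cylinder and fixes `1`, so only `1` has these digits, and the word
recurs after exactly `n` places.
-/

noncomputable def Tneg (β : ℝ) : ℝ → ℝ := fun y => -β * y + ⌊β * y⌋ + 1

noncomputable def dExp (β : ℝ) (x : ℝ) : ℕ → ℕ :=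
  fun i => (⌊β * ((Tneg β)^[i] x)⌋).toNat + 1

/-- The (−β)-shift: the closure of the set of (−β)-expansions of points of `(0,1]`. -/
noncomputable def SigmaNegBeta (β : ℝ) : Set (ℕ → ℕ) :=
  closure {y | ∃ x ∈ Set.Ioc (0 : ℝ) 1, y = dExp β x}

def shift (x : ℕ → ℕ) : ℕ → ℕ := fun n => x (n + 1)

/-- The non-intrinsically ergodic subshift `X = {1^∞} ∪ {1^n 2^∞ : n ≥ 1} ∪ {2^∞}`. -/
def Xset : Set (ℕ → ℕ) :=
  {x | x = (fun _ => 1) ∨ x = (fun _ => 2) ∨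
    ∃ n : ℕ, 1 ≤ n ∧ x = fun i => if i < n then 1 else 2}

open Set Function

section Expansion

variable {β : ℝ}

lemma Tneg_mem_Ioc (β y : ℝ) : Tneg β y ∈ Ioc (0 : ℝ) 1 := by
  have h₁ := Int.lt_floor_add_one (β * y)
  have h₂ := Int.floor_le (β * y)
  constructor <;> simp only [Tneg] <;> linarith

lemma iterate_Tneg_mem_Ioc (β : ℝ) {t : ℝ} (ht : t ∈ Ioc (0 : ℝ) 1) :
    ∀ k, (Tneg β)^[k] t ∈ Ioc (0 : ℝ) 1
  | 0 => ht
  | k + 1 => by rw [iterate_succ_apply']; exact Tneg_mem_Ioc β _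

lemma dExp_iterate_Tneg (β t : ℝ) (k i : ℕ) :
    dExp β ((Tneg β)^[k] t) i = dExp β t (k + i) := by
  simp only [dExp, ← iterate_add_apply, Nat.add_comm i k]

lemma abs_sub_lt_one_of_mem_Ioc {a b : ℝ} (ha : a ∈ Ioc (0 : ℝ) 1) (hb : b ∈ Ioc (0 : ℝ) 1) :
    |a - b| < 1 :=
  abs_sub_lt_iff.2 ⟨by linarith [ha.2, hb.1], by linarith [ha.1, hb.2]⟩

lemma Tneg_eq_dExp_sub {t : ℝ} (h : 0 ≤ β * t) : Tneg β t = dExp β t 0 - β * t := by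
  simp only [Tneg, dExp, iterate_zero, id_eq, Nat.cast_add, Nat.cast_one]
  rw [← Int.cast_natCast, Int.toNat_of_nonneg (Int.floor_nonneg.2 h)]
  ring

lemma Tneg_sub_Tneg {a b : ℝ} (ha : 0 ≤ β * a) (hb : 0 ≤ β * b)
    (h : dExp β a 0 = dExp β b 0) : Tneg β a - Tneg β b = -β * (a - b) := by
  rw [Tneg_eq_dExp_sub ha, Tneg_eq_dExp_sub hb, h]
  ring

lemma iterate_Tneg_sub_iterate_Tneg (hβ : 0 < β) {a b : ℝ} (ha : a ∈ Ioc (0 : ℝ) 1)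
    (hb : b ∈ Ioc (0 : ℝ) 1) :
    ∀ n, (∀ i < n, dExp β a i = dExp β b i) →
      (Tneg β)^[n] a - (Tneg β)^[n] b = (-β) ^ n * (a - b)
  | 0, _ => by simp
  | n + 1, hd => by
    have hpos : ∀ {t}, t ∈ Ioc (0 : ℝ) 1 → 0 ≤ β * (Tneg β)^[n] t := fun ht =>
      (mul_pos hβ (iterate_Tneg_mem_Ioc β ht n).1).le
    have hdn : dExp β ((Tneg β)^[n] a) 0 = dExp β ((Tneg β)^[n] b) 0 := by
      simpa only [dExp_iterate_Tneg, Nat.add_zero] using hd n n.lt_succ_self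
    rw [iterate_succ_apply', iterate_succ_apply', Tneg_sub_Tneg (hpos ha) (hpos hb) hdn,
      iterate_Tneg_sub_iterate_Tneg hβ ha hb n fun i hi => hd i (by omega), pow_succ]
    ring

lemma dExp_injOn (hβ : 1 < β) : InjOn (dExp β) (Ioc (0 : ℝ) 1) := by
  intro a ha b hb hab
  by_contra hne
  have hpos : 0 < |a - b| := abs_pos.2 (sub_ne_zero.2 hne)
  obtain ⟨n, hn⟩ := pow_unbounded_of_one_lt (|a - b|⁻¹) hβ
  have hsub := iterate_Tneg_sub_iterate_Tneg (by linarith) ha hb n fun i _ => congrFun hab i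
  have hlt := abs_sub_lt_one_of_mem_Ioc (iterate_Tneg_mem_Ioc β ha n) (iterate_Tneg_mem_Ioc β hb n)
  rw [hsub, abs_mul, abs_pow, abs_neg, abs_of_pos (by linarith)] at hlt
  rw [inv_lt_iff_one_lt_mul₀ hpos] at hn
  linarith [mul_comm (β ^ n) |a - b|]

lemma inv_mem_Ioo_zero_one (hβ : 1 < β) : β⁻¹ ∈ Ioo (0 : ℝ) 1 :=
  ⟨inv_pos.2 (by linarith), inv_lt_one_of_one_lt₀ hβ⟩

lemma dExp_inv_zero (hβ : β ≠ 0) : dExp β β⁻¹ 0 = 2 := by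
  simp [dExp, mul_inv_cancel₀ hβ]

lemma Tneg_inv (hβ : β ≠ 0) : Tneg β β⁻¹ = 1 := by
  simp [Tneg, mul_inv_cancel₀ hβ]

lemma inv_one_add_mem_Ioc (hβ : 0 ≤ β) : (1 + β)⁻¹ ∈ Ioc (0 : ℝ) 1 :=
  ⟨by positivity, inv_le_one_of_one_le₀ (by linarith)⟩

lemma floor_mul_inv_one_add (hβ : 0 ≤ β) : ⌊β * (1 + β)⁻¹⌋ = 0 :=
  Int.floor_eq_zero_iff.2 ⟨by positivity, by
    rw [← div_eq_mul_inv, div_lt_one (by linarith)]; linarith⟩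

lemma Tneg_inv_one_add (hβ : 0 ≤ β) : Tneg β (1 + β)⁻¹ = (1 + β)⁻¹ := by
  simp only [Tneg, floor_mul_inv_one_add hβ, Int.cast_zero]
  field_simp
  ring

lemma dExp_inv_one_add (hβ : 0 ≤ β) : dExp β (1 + β)⁻¹ = fun _ => 1 := by
  funext i
  simp [dExp, iterate_fixed (Tneg_inv_one_add hβ), floor_mul_inv_one_add hβ]

lemma Tneg_one_sub_div (hβ : 1 < β) {y : ℝ} (hy : y ∈ Ioo (0 : ℝ) 1) :
    (1 - y) / β ∈ Ioo (0 : ℝ) 1 ∧ dExp β ((1 - y) / β) 0 = 1 ∧ Tneg β ((1 - y) / β) = y := by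
  have hβ0 : β ≠ 0 := by positivity
  have hmul : β * ((1 - y) / β) = 1 - y := by field_simp
  have hfloor : ⌊β * ((1 - y) / β)⌋ = 0 := by
    rw [hmul]; exact Int.floor_eq_zero_iff.2 ⟨by linarith [hy.2], by linarith [hy.1]⟩
  refine ⟨⟨div_pos (by linarith [hy.2]) (by positivity), ?_⟩, by simp [dExp, hfloor], ?_⟩
  · rw [div_lt_one (by positivity)]; linarith [hy.1]
  · simp only [Tneg, hfloor, Int.cast_zero]
    linear_combination -hmul

lemma exists_dExp_ones_prefix (hβ : 1 < β) {y : ℝ} (hy : y ∈ Ioo (0 : ℝ) 1) :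
    ∀ k, ∃ c ∈ Ioo (0 : ℝ) 1, (∀ i < k, dExp β c i = 1) ∧ (Tneg β)^[k] c = y
  | 0 => ⟨y, hy, fun _ hi => absurd hi (Nat.not_lt_zero _), rfl⟩
  | k + 1 => by
    obtain ⟨c, hc, hones, hck⟩ := exists_dExp_ones_prefix hβ hy k
    obtain ⟨hc', hdigit, hT⟩ := Tneg_one_sub_div hβ hc
    refine ⟨(1 - c) / β, hc', fun i hi => ?_, by rw [iterate_succ_apply, hT, hck]⟩
    rcases i with _ | i
    · exact hdigit
    · rw [← Nat.add_comm 1 i, ← dExp_iterate_Tneg, iterate_one, hT]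
      exact hones i (by omega)

lemma dExp_eq_one_or_two (hβ : 0 ≤ β) (hβ2 : β < 2) {t : ℝ} (ht : t ∈ Ioc (0 : ℝ) 1) (i : ℕ) :
    dExp β t i = 1 ∨ dExp β t i = 2 := by
  have hu := iterate_Tneg_mem_Ioc β ht i
  have h0 : (0 : ℤ) ≤ ⌊β * (Tneg β)^[i] t⌋ := Int.floor_nonneg.2 (by nlinarith [hu.1])
  have h2 : ⌊β * (Tneg β)^[i] t⌋ < 2 := Int.floor_lt.2 (by push_cast; nlinarith [hu.1, hu.2])
  simp only [dExp]
  omega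

end Expansion

section Shift

lemma iterate_shift_apply (x : ℕ → ℕ) (k i : ℕ) : shift^[k] x i = x (k + i) := by
  induction k generalizing x with
  | zero => simp
  | succ k ih => rw [iterate_succ_apply, ih]; simp only [shift]; congr 1; omega

lemma iterate_shift_dExp (β t : ℝ) (k : ℕ) : shift^[k] (dExp β t) = dExp β ((Tneg β)^[k] t) := by
  funext i
  rw [iterate_shift_apply, dExp_iterate_Tneg]

lemma shift_dExp (β t : ℝ) : shift (dExp β t) = dExp β (Tneg β t) := by
  simpa using iterate_shift_dExp β t 1

lemma continuous_shift : Continuous shift :=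
  continuous_pi fun n => continuous_apply (n + 1)

lemma mapsTo_shift_SigmaNegBeta (β : ℝ) : MapsTo shift (SigmaNegBeta β) (SigmaNegBeta β) := by
  refine MapsTo.closure ?_ continuous_shift
  rintro _ ⟨t, ht, rfl⟩
  exact ⟨Tneg β t, Tneg_mem_Ioc β t, shift_dExp β t⟩

lemma mapsTo_shift_SigmaNegBeta_inter {β : ℝ} {U : Set (ℕ → ℕ)} (hU : IsClopen U)
    (hinv : ∀ t ∈ Ioc (0 : ℝ) 1, dExp β t ∈ U → dExp β (Tneg β t) ∈ U) :
    MapsTo shift (SigmaNegBeta β ∩ U) U := by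
  have hexp : MapsTo shift (U ∩ {y | ∃ x ∈ Ioc (0 : ℝ) 1, y = dExp β x}) U := by
    rintro _ ⟨hx, t, ht, rfl⟩
    exact shift_dExp β t ▸ hinv t ht hx
  intro x hx
  have := (hexp.closure continuous_shift) (hU.isOpen.inter_closure ⟨hx.2, hx.1⟩)
  rwa [hU.isClosed.closure_eq] at this

end Shift

lemma mem_Xset_iff {x : ℕ → ℕ} :
    x ∈ Xset ↔ x = (fun _ => 1) ∨ ∃ m, x = fun i => if i < m then 1 else 2 := by
  constructor
  · rintro (h | h | ⟨m, -, h⟩)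
    · exact Or.inl h
    · exact Or.inr ⟨0, by simpa using h⟩
    · exact Or.inr ⟨m, h⟩
  · rintro (h | ⟨m, rfl⟩)
    · exact Or.inl h
    · rcases Nat.eq_zero_or_pos m with rfl | hm
      · exact Or.inr (Or.inl (by simp))
      · exact Or.inr (Or.inr ⟨m, hm, rfl⟩)

lemma ite_mem_Xset (p : ℕ → Prop) [DecidablePred p] (hp : ∀ i, p i → p (i + 1)) :
    (fun i => if p i then 2 else 1) ∈ Xset := by
  rw [mem_Xset_iff]
  by_cases hex : ∃ i, p i
  · have hup : ∀ i, Nat.find hex ≤ i → p i := fun i hi => by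
      induction i, hi using Nat.le_induction with
      | base => exact Nat.find_spec hex
      | succ k _ ih => exact hp k ih
    refine Or.inr ⟨Nat.find hex, funext fun i => ?_⟩
    by_cases hi : i < Nat.find hex
    · simp [hi, Nat.find_min hex hi]
    · simp [hi, hup i (not_lt.1 hi)]
  · push Not at hex
    exact Or.inl (funext fun i => if_neg (hex i))

/-- Shifting `1^m 2^∞` yields every `1^k 2^∞` with `k ≤ m`. -/
lemma Xset_subset_of_mapsTo_shift {S : Set (ℕ → ℕ)} (hSX : S ⊆ Xset) (hS : MapsTo shift S S)
    (hones : (fun _ => 1) ∈ S)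
    (hlong : ∀ N, ∃ x ∈ S, (∀ i < N, x i = 1) ∧ x ≠ fun _ => 1) :
    Xset ⊆ S := by
  intro y hy
  rcases mem_Xset_iff.1 hy with rfl | ⟨k, rfl⟩
  · exact hones
  obtain ⟨x, hxS, hx1, hxne⟩ := hlong k
  obtain ⟨m, rfl⟩ := (mem_Xset_iff.1 (hSX hxS)).resolve_left hxne
  have hkm : k ≤ m := by
    by_contra! hmk
    simpa using hx1 m hmk
  convert hS.iterate (m - k) hxS using 1
  funext i
  rw [iterate_shift_apply]
  by_cases hi : i < k
  · simp [hi, show m - k + i < m by omega]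
  · simp [hi, show ¬ m - k + i < m by omega]

section Itinerary

variable {U : Set (ℕ → ℕ)}

open Classical in
noncomputable def itinerary (U : Set (ℕ → ℕ)) (x : ℕ → ℕ) : ℕ → ℕ :=
  fun i => if shift^[i] x ∈ U then 2 else 1

lemma itinerary_shift (x : ℕ → ℕ) : itinerary U (shift x) = shift (itinerary U x) :=
  rfl

lemma continuous_itinerary (hU : IsClopen U) : Continuous (itinerary U) := by
  classical
  refine continuous_pi fun i => continuous_const.if (fun x hx => ?_) continuous_const
  have hclopen : IsClopen {x | shift^[i] x ∈ U} := hU.preimage (continuous_shift.iterate i)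
  simp [hclopen.frontier_eq] at hx

lemma itinerary_mem_Xset {x : ℕ → ℕ} (h : ∀ i, shift^[i] x ∈ U → shift^[i + 1] x ∈ U) :
    itinerary U x ∈ Xset := by
  classical exact ite_mem_Xset _ h

lemma itinerary_eq_one {W : ℕ} (hUW : ∀ y ∈ U, ∃ j < W, y j ≠ 1) {x : ℕ → ℕ} {i : ℕ}
    (hx : ∀ j < i + W, x j = 1) : itinerary U x i = 1 := by
  refine if_neg fun hxU => ?_
  obtain ⟨j, hj, hne⟩ := hUW _ hxU
  exact hne (by rw [iterate_shift_apply]; exact hx _ (by omega))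

end Itinerary

def IsFactorMap (X Y : Set (ℕ → ℕ)) (π : (ℕ → ℕ) → ℕ → ℕ) : Prop :=
  ContinuousOn π X ∧ π '' X = Y ∧ ∀ x ∈ X, π (shift x) = shift (π x)

section Factor

variable {β : ℝ}

lemma dExp_mem_SigmaNegBeta {t : ℝ} (ht : t ∈ Ioc (0 : ℝ) 1) : dExp β t ∈ SigmaNegBeta β :=
  subset_closure ⟨t, ht, rfl⟩

theorem isFactorMap_itinerary (hβ : 1 < β) {U : Set (ℕ → ℕ)} (hU : IsClopen U) {W : ℕ}
    (hUW : ∀ y ∈ U, ∃ j < W, y j ≠ 1)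
    (hinv : ∀ t ∈ Ioc (0 : ℝ) 1, dExp β t ∈ U → dExp β (Tneg β t) ∈ U)
    (hne : ∃ y ∈ Ioo (0 : ℝ) 1, dExp β y ∈ U) :
    IsFactorMap (SigmaNegBeta β) Xset (itinerary U) := by
  have hshift := mapsTo_shift_SigmaNegBeta β
  have hcomm : ∀ x, itinerary U (shift x) = shift (itinerary U x) := itinerary_shift
  have himage : itinerary U '' SigmaNegBeta β ⊆ Xset := by
    rintro _ ⟨x, hx, rfl⟩
    refine itinerary_mem_Xset fun i hi => ?_
    rw [iterate_succ_apply']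
    exact mapsTo_shift_SigmaNegBeta_inter hU hinv ⟨hshift.iterate i hx, hi⟩
  refine ⟨(continuous_itinerary hU).continuousOn, himage.antisymm ?_, fun x _ => hcomm x⟩
  refine Xset_subset_of_mapsTo_shift himage ?_ ?_ ?_
  · rintro _ ⟨x, hx, rfl⟩
    exact ⟨shift x, hshift hx, hcomm x⟩
  · refine ⟨_, dExp_mem_SigmaNegBeta (inv_one_add_mem_Ioc (by linarith)),
      funext fun i => itinerary_eq_one hUW fun j _ => ?_⟩
    rw [dExp_inv_one_add (by linarith)]
  · intro N
    obtain ⟨y, hy, hyU⟩ := hne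
    obtain ⟨c, hc, hones, hcy⟩ := exists_dExp_ones_prefix hβ hy (N + W)
    refine ⟨_, ⟨_, dExp_mem_SigmaNegBeta ⟨hc.1, hc.2.le⟩, rfl⟩,
      fun i hi => itinerary_eq_one hUW fun j hj => hones j (by omega), fun h => ?_⟩
    have h2 : itinerary U (dExp β c) (N + W) = 2 :=
      if_pos (by rwa [iterate_shift_dExp, hcy])
    simpa [h2] using congrFun h (N + W)

end Factor

section Occurrence

def occurrenceSet (w : ℕ → ℕ) (n W : ℕ) : Set (ℕ → ℕ) :=
  {x | ∃ j < W, ∀ i < n, x (j + i) = w i}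

variable {w : ℕ → ℕ} {n W : ℕ}

lemma isClopen_occurrenceSet : IsClopen (occurrenceSet w n W) := by
  have hset : occurrenceSet w n W =
      ⋃ j ∈ Finset.range W, ⋂ i ∈ Finset.range n, {x | x (j + i) = w i} := by
    ext x
    simp [occurrenceSet]
  rw [hset]
  exact isClopen_biUnion_finset fun j _ => isClopen_biInter_finset fun i _ =>
    (isClopen_discrete {w i}).preimage (continuous_apply (j + i))

lemma exists_ne_one_of_mem_occurrenceSet (hn : 0 < n) (hw : w 0 ≠ 1) {x : ℕ → ℕ}
    (hx : x ∈ occurrenceSet w n W) : ∃ j < W, x j ≠ 1 := by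
  obtain ⟨j, hj, hocc⟩ := hx
  exact ⟨j, hj, by simpa using (hocc 0 hn).trans_ne hw⟩

lemma shift_mem_occurrenceSet {x : ℕ → ℕ}
    (hrec : (∀ i < n, x i = w i) → ∃ j, 0 < j ∧ j ≤ W ∧ ∀ i < n, x (j + i) = w i)
    (hx : x ∈ occurrenceSet w n W) : shift x ∈ occurrenceSet w n W := by
  obtain ⟨j, hj, hocc⟩ := hx
  rcases j with _ | j
  · obtain ⟨k, hk0, hkW, hock⟩ := hrec (by simpa using hocc)
    exact ⟨k - 1, by omega, fun i hi => by simp only [shift]; rw [← hock i hi]; congr 1; omega⟩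
  · exact ⟨j, by omega, fun i hi => by simp only [shift]; rw [← hocc i hi]; congr 1; omega⟩

theorem exists_isFactorMap_of_occurrence {β : ℝ} (hβ : 1 < β) (hn : 0 < n) (hw : w 0 ≠ 1)
    (hrec : ∀ t ∈ Ioc (0 : ℝ) 1, (∀ i < n, dExp β t i = w i) →
      ∃ j, 0 < j ∧ j ≤ W ∧ ∀ i < n, dExp β t (j + i) = w i)
    (hne : ∃ y ∈ Ioo (0 : ℝ) 1, dExp β y ∈ occurrenceSet w n W) :
    ∃ π, IsFactorMap (SigmaNegBeta β) Xset π := by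
  refine ⟨_, isFactorMap_itinerary hβ isClopen_occurrenceSet
    (fun _ => exists_ne_one_of_mem_occurrenceSet hn hw) (fun t ht htU => ?_) hne⟩
  rw [← shift_dExp]
  exact shift_mem_occurrenceSet (hrec t ht) htU

end Occurrence

section GoldenRatio

open scoped goldenRatio

variable {β : ℝ}

lemma sq_lt_add_one_of_lt_goldenRatio (hβ : 0 ≤ β) (hφ : β < φ) : β ^ 2 < β + 1 := by
  nlinarith [mul_pos (sub_pos.2 hφ) (sub_pos.2 (Real.goldenConj_neg.trans_le hβ)),
    Real.goldenRatio_add_goldenConj, Real.goldenRatio_mul_goldenConj]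

/-- The fixed point `f = (1 + β)⁻¹` of the digit-`1` branch `y ↦ 1 - β y` is repelling, and a
point with digit `2` is sent at least `2 - β - f` above it; so a run of `1`s right after a `2`
cannot last `M` steps once `β ^ M (2 - β - f) > 1`. -/
lemma exists_dExp_eq_two_of_dExp_zero_eq_two (hβ : 0 < β) {M : ℕ}
    (hM : 1 < β ^ M * (2 - β - (1 + β)⁻¹)) {t : ℝ} (ht : t ∈ Ioc (0 : ℝ) 1)
    (h0 : dExp β t 0 = 2) : ∃ j, 0 < j ∧ j ≤ M ∧ dExp β t j = 2 := by
  by_contra! hno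
  set f := (1 + β)⁻¹
  have hδ : 0 < 2 - β - f := pos_of_mul_pos_right (one_pos.trans hM) (pow_pos hβ M).le
  have hf : f ∈ Ioc (0 : ℝ) 1 := inv_one_add_mem_Ioc hβ.le
  have hTt := Tneg_mem_Ioc β t
  have hdigits : ∀ i < M, dExp β (Tneg β t) i = dExp β f i := by
    intro i hi
    rw [dExp_inv_one_add hβ.le, ← iterate_one (Tneg β), dExp_iterate_Tneg]
    refine (dExp_eq_one_or_two hβ.le (by linarith [hf.1]) ht _).resolve_right ?_
    exact hno _ (by omega) (by omega)
  have hsub := iterate_Tneg_sub_iterate_Tneg hβ hTt hf M hdigits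
  rw [iterate_fixed (Tneg_inv_one_add hβ.le)] at hsub
  have hfar : 2 - β - f ≤ Tneg β t - f := by
    rw [Tneg_eq_dExp_sub (mul_pos hβ ht.1).le, h0]
    push_cast
    nlinarith [ht.2]
  have hclose := abs_sub_lt_one_of_mem_Ioc (iterate_Tneg_mem_Ioc β hTt M) hf
  rw [hsub, abs_mul, abs_pow, abs_neg, abs_of_pos hβ, abs_of_nonneg (hδ.le.trans hfar)] at hclose
  nlinarith [pow_pos hβ M]

theorem exists_isFactorMap_of_lt_goldenRatio (hβ : 1 < β) (hφ : β < φ) :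
    ∃ π, IsFactorMap (SigmaNegBeta β) Xset π := by
  have hβ0 : 0 < β := by linarith
  have hδ : 0 < 2 - β - (1 + β)⁻¹ := by
    rw [show 2 - β - (1 + β)⁻¹ = (1 + β - β ^ 2) / (1 + β) by field_simp; ring]
    exact div_pos (by linarith [sq_lt_add_one_of_lt_goldenRatio hβ0.le hφ]) (by positivity)
  obtain ⟨M, hM⟩ := pow_unbounded_of_one_lt (2 - β - (1 + β)⁻¹)⁻¹ hβ
  rw [inv_lt_iff_one_lt_mul₀ hδ] at hM
  refine exists_isFactorMap_of_occurrence (w := fun _ => 2) (n := 1) (W := M + 1) hβ one_pos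
    (by norm_num) (fun t ht h => ?_) ⟨β⁻¹, inv_mem_Ioo_zero_one hβ, 0, by omega, fun i hi => ?_⟩
  · obtain ⟨j, hj0, hjM, hj⟩ := exists_dExp_eq_two_of_dExp_zero_eq_two hβ0 hM ht (h 0 one_pos)
    exact ⟨j, hj0, by omega, fun i hi => by simpa [Nat.lt_one_iff.1 hi] using hj⟩
  · simpa [Nat.lt_one_iff.1 hi] using dExp_inv_zero hβ0.ne'

end GoldenRatio

section OddPeriod

variable {β : ℝ}

lemma iterate_Tneg_one_eq_one (hβ : 1 < β) {n : ℕ}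
    (hper : ∀ i, dExp β 1 (i + n) = dExp β 1 i) : (Tneg β)^[n] 1 = 1 :=
  dExp_injOn hβ (iterate_Tneg_mem_Ioc β (right_mem_Ioc.2 one_pos) n) (right_mem_Ioc.2 one_pos)
    (funext fun i => by rw [dExp_iterate_Tneg, Nat.add_comm, hper])

/-- For odd `n`, `T^n` reverses orientation on the cylinder of the first `n` digits of `1` and
fixes its right endpoint `1`, so nothing else lies in that cylinder. -/
lemma eq_one_of_dExp_eq_dExp_one (hβ : 1 < β) {n : ℕ} (hodd : Odd n)
    (hper : ∀ i, dExp β 1 (i + n) = dExp β 1 i) {s : ℝ} (hs : s ∈ Ioc (0 : ℝ) 1)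
    (hd : ∀ i < n, dExp β s i = dExp β 1 i) : s = 1 := by
  have hsub := iterate_Tneg_sub_iterate_Tneg (by linarith) hs (right_mem_Ioc.2 one_pos) n hd
  rw [iterate_Tneg_one_eq_one hβ hper, hodd.neg_pow] at hsub
  have hle := (iterate_Tneg_mem_Ioc β hs n).2
  exact le_antisymm hs.2 (by nlinarith [pow_pos (by linarith : 0 < β) n])

theorem exists_isFactorMap_of_odd_period (hβ : 1 < β) {n : ℕ} (hodd : Odd n)
    (hper : ∀ i, dExp β 1 (i + n) = dExp β 1 i) :
    ∃ π, IsFactorMap (SigmaNegBeta β) Xset π := by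
  have hn : 0 < n := hodd.pos
  have hw : dExp β 1 0 ≠ 1 := by
    have : (1 : ℤ) ≤ ⌊β * 1⌋ := Int.le_floor.2 (by push_cast; linarith)
    simp only [dExp, iterate_zero, id_eq]
    omega
  refine exists_isFactorMap_of_occurrence (W := n + 1) hβ hn hw (fun t ht h => ?_)
    ⟨β⁻¹, inv_mem_Ioo_zero_one hβ, 1, by omega, fun i _ => ?_⟩
  · obtain rfl := eq_one_of_dExp_eq_dExp_one hβ hodd hper ht h
    exact ⟨n, hn, by omega, fun i _ => by rw [Nat.add_comm, hper]⟩
  · rw [← dExp_iterate_Tneg, iterate_one, Tneg_inv (by positivity)]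

end OddPeriod

/-- If `1 < β < (1+√5)/2`, or `d_{−β}(1)` is periodic with odd period, then `X` is a
factor of the (−β)-shift: there is a continuous shift-commuting surjection
`π : Σ_{−β} → X`. -/
theorem exists_non_intrinsically_ergodic_factor (β : ℝ) (hβ : 1 < β)
    (h : β < (1 + Real.sqrt 5) / 2 ∨
      ∃ n : ℕ, 0 < n ∧ Odd n ∧ ∀ i, dExp β 1 (i + n) = dExp β 1 i) :
    ∃ π : (ℕ → ℕ) → (ℕ → ℕ),
      ContinuousOn π (SigmaNegBeta β) ∧
      π '' SigmaNegBeta β = Xset ∧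
      ∀ x ∈ SigmaNegBeta β, π (shift x) = shift (π x) := by
  rcases h with hφ | ⟨n, -, hodd, hper⟩
  · exact exists_isFactorMap_of_lt_goldenRatio hβ hφ
  · exact exists_isFactorMap_of_odd_period hβ hodd hper
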